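/- For a left R-module M the following are equivalent: (1) every injective module belongs to the flat-precover completing domain of M; (2) the injective envelope E(M) belongs to the flat-precover completing domain of M; (3) M embeds in a flat module; (4) for every injective module E and every submodule N of E with Ext¹(M,N) = 0, the quotient E/N belongs to the flat-precover completing domain of M. -/

import Mathlib

open CategoryTheory

universe u

variable {R : Type u} [Ring R]

/-- The submodule of relations defining the balanced tensor product `W ⊗_R M` of a
right `R`-module `W` and a left `R`-module `M` as a quotient of `W ⊗_ℤ M`. -/
abbrev tensorRel (W : Type u) [AddCommGroup W] [Module Rᵐᵒᵖ W]
    (M : Type u) [AddCommGroup M] [Module R M] : Submodule ℤ (TensorProduct ℤ W M) :=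
  Submodule.span ℤ
    {x | ∃ (w : W) (r : R) (m : M), x = (MulOpposite.op r • w) ⊗ₜ[ℤ] m - w ⊗ₜ[ℤ] (r • m)}

/-- The balanced tensor product `W ⊗_R M` over the (possibly noncommutative) ring `R`. -/
abbrev RTensor (W : Type u) [AddCommGroup W] [Module Rᵐᵒᵖ W]
    (M : Type u) [AddCommGroup M] [Module R M] : Type u :=
  TensorProduct ℤ W M ⧸ tensorRel (R := R) W M

/-- The map `W ⊗_R M → K ⊗_R M` induced by a morphism `i : W → K` of right
`R`-modules. -/
noncomputable def tensorMap {W K : Type u} [AddCommGroup W] [Module Rᵐᵒᵖ W]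
    [AddCommGroup K] [Module Rᵐᵒᵖ K] (i : W →ₗ[Rᵐᵒᵖ] K)
    (M : Type u) [AddCommGroup M] [Module R M] :
    RTensor (R := R) W M →ₗ[ℤ] RTensor (R := R) K M :=
  Submodule.mapQ _ _ (LinearMap.rTensor M i.toAddMonoidHom.toIntLinearMap) (by
    refine Submodule.span_le.2 ?_
    rintro x ⟨w, r, m, rfl⟩
    refine Submodule.mem_comap.2 (Submodule.subset_span ?_)
    refine ⟨i w, r, m, ?_⟩
    have h := map_sub (LinearMap.rTensor M i.toAddMonoidHom.toIntLinearMap)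
      ((MulOpposite.op r • w) ⊗ₜ[ℤ] m) (w ⊗ₜ[ℤ] (r • m))
    simp only [LinearMap.rTensor_tmul, AddMonoidHom.coe_toIntLinearMap,
      LinearMap.toAddMonoidHom_coe, map_smul] at h
    exact h)

/-- `M` is a flat left `R`-module: tensoring with `M` preserves injectivity of
morphisms of right `R`-modules. -/
def IsFlat (M : Type u) [AddCommGroup M] [Module R M] : Prop :=
  ∀ (W K : Type u) [AddCommGroup W] [Module Rᵐᵒᵖ W] [AddCommGroup K] [Module Rᵐᵒᵖ K]
    (i : W →ₗ[Rᵐᵒᵖ] K), Function.Injective i → Function.Injective (tensorMap (R := R) i M)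

/-- `N` belongs to the flat-precover completing domain `𝔉⁻¹(M)` of `M`:
every morphism `M ⟶ N` factors through a flat module. -/
def FlatDom (M N : ModuleCat.{u} R) : Prop :=
  ∀ f : M ⟶ N, ∃ (F : ModuleCat.{u} R) (h : M ⟶ F) (k : F ⟶ N),
    IsFlat (R := R) ↥F ∧ h ≫ k = f

/-- `Ext¹(A,B) = 0`, expressed by the splitting of every short exact sequence
`0 → B → E → A → 0`. -/
def Ext1Vanish (A B : ModuleCat.{u} R) : Prop :=
  ∀ (E : ModuleCat.{u} R) (i : B ⟶ E) (p : E ⟶ A),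
    Function.Injective i → Function.Surjective p → Function.Exact ⇑i ⇑p →
      ∃ r : E ⟶ B, i ≫ r = 𝟙 B
/-!
An injective envelope `M ⊆ E(M)` is built as a maximal essential extension of `M` inside an
injective module, which is a direct summand there. If `E(M)` is in `𝔉⁻¹(M)`, the inclusion
`M → E(M)` factors through a flat module, which then contains `M`. Conversely, if `M ⊆ F` with
`F` flat, every map `M → E` to an injective module extends over `F`; when `Ext¹(M, N) = 0`, every
map `M → E ⧸ N` lifts to `E` (the pullback of `E → E ⧸ N` splits), so `E ⧸ N ∈ 𝔉⁻¹(M)` too.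
-/

universe v

theorem Module.Injective.of_retraction {P Q : Type v} [AddCommGroup P] [Module R P]
    [AddCommGroup Q] [Module R Q] [Module.Injective R Q] (i : P →ₗ[R] Q) (r : Q →ₗ[R] P)
    (hri : r ∘ₗ i = .id) : Module.Injective R P where
  out _ _ _ _ _ _ f hf g := by
    obtain ⟨l, hl⟩ := Module.Injective.out f hf (i ∘ₗ g)
    exact ⟨r ∘ₗ l, fun x => by simpa [hl] using LinearMap.congr_fun hri (g x)⟩

namespace Submodule

variable {Q : Type v} [AddCommGroup Q] [Module R Q]

/-- `H ⊓ N` is essential in `H`: it meets every nonzero cyclic submodule of `H`. -/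
def IsEssentialIn (N H : Submodule R Q) : Prop :=
  ∀ x ∈ H, x ≠ 0 → ∃ r : R, r • x ∈ N ∧ r • x ≠ 0

theorem isEssentialIn_refl (N : Submodule R Q) : N.IsEssentialIn N :=
  fun x hx hx0 => ⟨1, by rwa [one_smul], by rwa [one_smul]⟩

theorem IsEssentialIn.trans {N H L : Submodule R Q} (hNH : N.IsEssentialIn H)
    (hHL : H.IsEssentialIn L) : N.IsEssentialIn L := by
  intro x hx hx0
  obtain ⟨r, hrH, hr0⟩ := hHL x hx hx0
  obtain ⟨s, hsN, hs0⟩ := hNH _ hrH hr0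
  exact ⟨s * r, by rwa [mul_smul], by rwa [mul_smul]⟩

theorem IsEssentialIn.inf_ne_bot {N : Submodule R Q} (hN : N.IsEssentialIn ⊤)
    {K : Submodule R Q} (hK : K ≠ ⊥) : K ⊓ N ≠ ⊥ := by
  obtain ⟨x, hxK, hx0⟩ := (Submodule.ne_bot_iff K).1 hK
  obtain ⟨r, hrN, hr0⟩ := hN x mem_top hx0
  exact (Submodule.ne_bot_iff _).2 ⟨r • x, ⟨K.smul_mem r hxK, hrN⟩, hr0⟩

theorem exists_le_maximal_isEssentialIn (N : Submodule R Q) :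
    ∃ H, N ≤ H ∧ Maximal N.IsEssentialIn H := by
  refine zorn_le_nonempty₀ _ (fun c hc hchain H₀ hH₀ => ⟨sSup c, ?_, fun _ => le_sSup⟩) N
    N.isEssentialIn_refl
  intro x hx hx0
  obtain ⟨H, hHc, hxH⟩ := (mem_sSup_of_directed ⟨H₀, hH₀⟩ hchain.directedOn).1 hx
  exact hc hHc x hxH hx0

theorem exists_maximal_disjoint (H : Submodule R Q) : ∃ K, Maximal (Disjoint · H) K := by
  obtain ⟨K, -, hK⟩ := zorn_le_nonempty₀ (Disjoint · H)
    (fun c hc hchain K₀ hK₀ => ⟨sSup c, (hchain.directedOn.disjoint_sSup_left).2 hc,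
      fun _ => le_sSup⟩) ⊥ disjoint_bot_left
  exact ⟨K, hK⟩

theorem isEssentialIn_map_mkQ_of_maximal_disjoint {H K : Submodule R Q}
    (hK : Maximal (Disjoint · H) K) : (H.map K.mkQ).IsEssentialIn ⊤ := by
  rintro x - hx0
  obtain ⟨q, rfl⟩ := K.mkQ_surjective x
  have hqK : q ∉ K := fun h => hx0 ((Quotient.mk_eq_zero K).2 h)
  have hlt : K < K ⊔ span R {q} := left_lt_sup.2 fun h => hqK (h (mem_span_singleton_self q))
  obtain ⟨h, ⟨hsup, hhH⟩, hh0⟩ :=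
    (Submodule.ne_bot_iff _).1 (disjoint_iff.not.1 (hK.not_prop_of_gt hlt))
  obtain ⟨k, hk, y, hy, rfl⟩ := mem_sup.1 hsup
  obtain ⟨r, rfl⟩ := mem_span_singleton.1 hy
  have hhK : k + r • q ∉ K := fun h' => hh0 (disjoint_def.1 hK.prop _ h' hhH)
  have heq : r • K.mkQ q = K.mkQ (k + r • q) := by
    simp [(Quotient.mk_eq_zero K).2 hk]
  exact ⟨r, heq ▸ mem_map_of_mem hhH, heq ▸ fun h => hhK ((Quotient.mk_eq_zero K).1 h)⟩

/-- With `K` a complement of `H`, injectivity of `Q` extends `H ↪ Q` to `φ : Q ⧸ K → Q`; the image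
of `φ` is an essential extension of `H`, hence equals `H` by maximality, so `φ ∘ mkQ` is a
retraction of `Q` onto `H`. -/
theorem injective_of_maximal_isEssentialIn [Module.Injective R Q] {N H : Submodule R Q}
    (hH : Maximal N.IsEssentialIn H) : Module.Injective R H := by
  obtain ⟨K, hK⟩ := exists_maximal_disjoint H
  have hHK : Function.Injective (K.mkQ ∘ₗ H.subtype) := by
    refine (injective_iff_map_eq_zero _).2 fun h hh => Subtype.ext ?_
    exact disjoint_def.1 hK.prop _ ((Quotient.mk_eq_zero K).1 hh) h.2
  obtain ⟨φ, hφ⟩ := Module.Injective.out _ hHK H.subtype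
  replace hφ : ∀ h ∈ H, φ (K.mkQ h) = h := fun h hh => hφ ⟨h, hh⟩
  have hHK_ess := isEssentialIn_map_mkQ_of_maximal_disjoint hK
  have hφ_inj : Function.Injective φ := by
    refine (injective_iff_map_eq_zero φ).2 fun x hx => by_contra fun hx0 => ?_
    obtain ⟨r, ⟨h, hhH, hrx⟩, hr0⟩ := hHK_ess x mem_top hx0
    have : φ (r • x) = h := by rw [← hrx, hφ h hhH]
    rw [map_smul, hx, smul_zero] at this
    exact hr0 (by rw [← hrx, ← this, map_zero])
  have hH_range : H ≤ LinearMap.range φ := fun h hh => ⟨K.mkQ h, hφ h hh⟩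
  have hrange_ess : H.IsEssentialIn (LinearMap.range φ) := by
    rintro - ⟨x, rfl⟩ hx0
    obtain ⟨r, ⟨h, hhH, hrx⟩, hr0⟩ := hHK_ess x mem_top (fun h => hx0 (by rw [h, map_zero]))
    have : φ (r • x) = h := by rw [← hrx, hφ h hhH]
    refine ⟨r, ?_⟩
    rw [← map_smul, this]
    exact ⟨hhH, fun h0 => hr0 (hφ_inj (by rw [this, h0, map_zero]))⟩
  have hrange : LinearMap.range φ ≤ H := hH.2 (hH.1.trans hrange_ess) hH_range
  refine Module.Injective.of_retraction H.subtype
    ((φ ∘ₗ K.mkQ).codRestrict H fun q => hrange ⟨K.mkQ q, rfl⟩) (LinearMap.ext fun h => ?_)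
  exact Subtype.ext (hφ h h.2)

end Submodule

open Submodule

theorem exists_injective_essential_extension (M : ModuleCat.{u} R) :
    ∃ (E : ModuleCat.{u} R) (i : M ⟶ E), Injective E ∧ Function.Injective i ∧
      ∀ K : Submodule R E, K ≠ ⊥ → K ⊓ LinearMap.range i.hom ≠ ⊥ := by
  let ι := Injective.ι M
  have hι : Function.Injective ι := (ModuleCat.mono_iff_injective ι).1 inferInstance
  have : Module.Injective R (Injective.under M : ModuleCat.{u} R) :=
    Module.injective_module_of_injective_object (inj := Injective.injective_under M) R _
  obtain ⟨H, hιH, hH⟩ := (LinearMap.range ι.hom).exists_le_maximal_isEssentialIn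
  have := injective_of_maximal_isEssentialIn hH
  let i : M ⟶ ModuleCat.of R H := ModuleCat.ofHom (ι.hom.codRestrict H fun m => hιH ⟨m, rfl⟩)
  refine ⟨_, i, Module.injective_object_of_injective_module R H,
    fun a b hab => hι (congrArg Subtype.val hab), fun K hK => IsEssentialIn.inf_ne_bot ?_ hK⟩
  intro x _ hx0
  obtain ⟨r, ⟨m, hm⟩, hr0⟩ := hH.1 x x.2 fun h => hx0 (Subtype.ext h)
  exact ⟨r, ⟨m, Subtype.ext hm⟩, fun h => hr0 (congrArg Subtype.val h)⟩

theorem FlatDom.of_lift {M N N' : ModuleCat.{u} R} (π : N ⟶ N')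
    (hπ : ∀ f : M ⟶ N', ∃ g : M ⟶ N, g ≫ π = f) (hN : FlatDom M N) : FlatDom M N' := by
  intro f
  obtain ⟨g, rfl⟩ := hπ f
  obtain ⟨F, h, k, hF, rfl⟩ := hN g
  exact ⟨F, h, k ≫ π, hF, by rw [Category.assoc]⟩

theorem flatDom_of_injective {M F : ModuleCat.{u} R} (hF : IsFlat (R := R) F) (i : M ⟶ F)
    (hi : Function.Injective i) (E : ModuleCat.{u} R) [Injective E] : FlatDom M E := by
  have : Mono i := (ModuleCat.mono_iff_injective i).2 hi
  exact fun f => ⟨F, i, Injective.factorThru f i, hF, Injective.comp_factorThru f i⟩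

theorem ext1Vanish_of_subsingleton (A B : ModuleCat.{u} R) [Subsingleton B] : Ext1Vanish A B :=
  fun _ _ _ _ _ _ => ⟨0, ModuleCat.hom_ext (LinearMap.ext fun _ => Subsingleton.elim _ _)⟩

theorem exists_lift_mkQ_of_ext1Vanish {M E : ModuleCat.{u} R} {K : Submodule R E}
    (hK : Ext1Vanish M (ModuleCat.of R K)) (f : M ⟶ ModuleCat.of R (E ⧸ K)) :
    ∃ g : M ⟶ E, g ≫ ModuleCat.ofHom K.mkQ = f := by
  -- `X` is the pullback of `E → E ⧸ K` along `f`; the lift comes from a section of `X → M`.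
  let X := LinearMap.ker (K.mkQ.coprod (-f.hom))
  have hX : ∀ v : E × M, v ∈ X ↔ K.mkQ v.1 = f v.2 := fun v => by
    simp [X, add_neg_eq_zero]
  let j : K →ₗ[R] X := (K.subtype.prod 0).codRestrict X fun k => (hX _).2 (by simp)
  let p : X →ₗ[R] M := LinearMap.snd R E M ∘ₗ X.subtype
  have hj : Function.Injective j := fun a b h =>
    Subtype.ext (congrArg (fun x : X => (x : E × M).1) h)
  have hp : Function.Surjective p := fun m =>
    let ⟨e, he⟩ := K.mkQ_surjective (f m)
    ⟨⟨(e, m), (hX _).2 he⟩, rfl⟩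
  have hjp : Function.Exact j p := by
    rintro ⟨⟨e, m⟩, hem⟩
    refine ⟨fun (hm : m = 0) => ⟨⟨e, ?_⟩, Subtype.ext (Prod.ext rfl hm.symm)⟩, ?_⟩
    · simpa [hm, Quotient.mk_eq_zero] using (hX _).1 hem
    · rintro ⟨k, hk⟩
      exact congrArg (fun x : X => (x : E × M).2) hk.symm
  obtain ⟨r, hr⟩ := hK (ModuleCat.of R X) (ModuleCat.ofHom j) (ModuleCat.ofHom p) hj hp hjp
  have hrj : r.hom ∘ₗ j = .id := by simpa using congrArg ModuleCat.Hom.hom hr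
  have hsplit := hjp.split_tfae'.out 1 0
  obtain ⟨-, s, hs⟩ := hsplit.1 ⟨hp, r.hom, hrj⟩
  refine ⟨ModuleCat.ofHom (LinearMap.fst R E M ∘ₗ X.subtype ∘ₗ s),
    ModuleCat.hom_ext (LinearMap.ext fun m => ?_)⟩
  have hsm : ((s m : X) : E × M).2 = m := LinearMap.congr_fun hs m
  simpa [hsm] using (hX _).1 (s m).2

theorem stmt_19 (M : ModuleCat.{u} R) :
    [∀ E : ModuleCat.{u} R, Injective E → FlatDom M E,
      ∀ (E : ModuleCat.{u} R) (i : M ⟶ E), Injective E → Function.Injective i →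
        (∀ K : Submodule R ↥E, K ≠ ⊥ → K ⊓ LinearMap.range i.hom ≠ ⊥) → FlatDom M E,
      ∃ (F : ModuleCat.{u} R) (i : M ⟶ F), IsFlat (R := R) ↥F ∧ Function.Injective i,
      ∀ E : ModuleCat.{u} R, Injective E → ∀ K : Submodule R ↥E,
        Ext1Vanish M (ModuleCat.of R ↥K) →
          FlatDom M (ModuleCat.of R (↥E ⧸ K))].TFAE := by
  tfae_have 1 → 2 := fun h1 E _ hE _ _ => h1 E hE
  tfae_have 2 → 3 := by
    intro h2
    obtain ⟨E, i, hE, hi, hess⟩ := exists_injective_essential_extension M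
    obtain ⟨F, h, k, hF, hhk⟩ := h2 E i hE hi hess i
    refine ⟨F, h, hF, fun a b hab => hi ?_⟩
    simp [← hhk, hab]
  tfae_have 3 → 4 := fun ⟨F, i, hF, hi⟩ E _ K hK =>
    (flatDom_of_injective hF i hi E).of_lift _ (exists_lift_mkQ_of_ext1Vanish hK)
  tfae_have 4 → 1 := by
    intro h4 E hE
    let e := (Submodule.quotEquivOfEqBot (⊥ : Submodule R E) rfl).toModuleIso
    exact (h4 E hE ⊥ (ext1Vanish_of_subsingleton _ _)).of_lift e.hom
      fun f => ⟨f ≫ e.inv, by rw [Category.assoc, e.inv_hom_id, Category.comp_id]⟩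
  tfae_finish
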